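/- arXiv:1003.0509 — 3 statements merged into one kernel-verified Lean document; each statement's English description precedes it below -/
import Mathlib

section
/- In the formal power series ring ℤ⟦q⟦, q·∏_{n≥1}(1-q^{9n})^3 = ∑_{n≥0} (-1)^n (2n+1) q^{(9n^2+9n)/2 + 1}. -/
open PowerSeries Finset

/-!
Write `T(j) = j(j+1)/2` and `(q;q)_n = ∏_{k=1}^n (1 - q^k)`. The polynomial
`P_n(w) = ∏_{k<n} (q^k - w)(1 - q^{k+1} w)` has, by the q-binomial theorem, the coefficients
`(-1)^i q^{T(i-n)} [2n, i]_q`. For `N = n + 1` it has the factor `1 - w`, so its derivative at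
`w = 1` is `(-1)^N (q;q)_N (q;q)_n`. Multiplying by `(q;q)_N` and pairing the indices `N + j` and
`n - j` gives
`(q;q)_N^2 (q;q)_n = ∑_j (-1)^j q^{T(j)} ((N + j) R_j - (n - j) R_{j+1})`,
where `R_j = (q;q)_N [2N, N+j]_q ≡ 1 mod q^{N-j+1}`. Hence
`(q;q)_N^3 ≡ ∑_{j<N} (-1)^j (2j+1) q^{T(j)} mod q^N`, which for `q = X^9` pins down the
coefficients in the theorem.
-/

section qProd

variable {R : Type*} [CommRing R]

/-- `qProd q 0 n` is the q-Pochhammer symbol `(q;q)_n`. -/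
def qProd (q : R) (a b : ℕ) : R := ∏ k ∈ Ioc a b, (1 - q ^ k)

theorem qProd_self (q : R) (a : ℕ) : qProd q a a = 1 := by simp [qProd]

theorem qProd_succ (q : R) {a b : ℕ} (h : a ≤ b) :
    qProd q a (b + 1) = qProd q a b * (1 - q ^ (b + 1)) :=
  prod_Ioc_succ_top h _

theorem qProd_mul_qProd (q : R) {a b c : ℕ} (hab : a ≤ b) (hbc : b ≤ c) :
    qProd q a b * qProd q b c = qProd q a c :=
  prod_Ioc_consecutive _ hab hbc

theorem map_qProd {S F : Type*} [CommRing S] [FunLike F R S] [RingHomClass F R S] (f : F)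
    (q : R) (a b : ℕ) : f (qProd q a b) = qProd (f q) a b := by
  simp [qProd, map_prod]

theorem pow_succ_dvd_qProd_sub_one (q : R) (a b : ℕ) : q ^ (a + 1) ∣ qProd q a b - 1 := by
  refine prod_induction _ (fun x => q ^ (a + 1) ∣ x - 1) (fun x y hx hy => ?_) (by simp)
    fun k hk => ?_
  · rw [show x * y - 1 = (x - 1) * y + (y - 1) by ring]
    exact dvd_add (hx.mul_right y) hy
  · rw [sub_sub_cancel_left, dvd_neg]
    exact pow_dvd_pow q (mem_Ioc.1 hk).1

/-- `qCentral q N j = (q;q)_N [2N, N+j]_q`, written without division. -/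
def qCentral (q : R) (N j : ℕ) : R := qProd q (N - j) N * qProd q (N + j) (2 * N)

theorem pow_succ_dvd_qCentral_sub_one (q : R) {N j : ℕ} (hj : j ≤ N) :
    q ^ (N - j + 1) ∣ qCentral q N j - 1 := by
  rw [qCentral, show ∀ a b : R, a * b - 1 = (a - 1) * b + (b - 1) by intros; ring]
  exact dvd_add ((pow_succ_dvd_qProd_sub_one q _ _).mul_right _)
    ((pow_dvd_pow q (by omega)).trans (pow_succ_dvd_qProd_sub_one q _ _))

end qProd

/-- `j(j+1)/2`, defined on `ℤ` because `jacobiCoeff` evaluates it at `i - n < 0`. -/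
def tri (j : ℤ) : ℕ := (j * (j + 1) / 2).toNat

theorem two_mul_tri (j : ℤ) : 2 * (tri j : ℤ) = j * (j + 1) := by
  have h : 0 ≤ j * (j + 1) := by rcases le_or_gt 0 j with h | h <;> nlinarith
  rw [tri, Int.toNat_of_nonneg (by omega)]
  exact Int.two_mul_ediv_two_of_even (Int.even_mul_succ_self j)

theorem tri_zero : tri 0 = 0 := rfl

theorem tri_neg_sub_one (j : ℤ) : tri (-j - 1) = tri j := by
  have := two_mul_tri (-j - 1); have := two_mul_tri j; nlinarith

theorem le_tri (j : ℕ) : j ≤ tri j := by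
  have := two_mul_tri j; nlinarith

theorem pow_tri_mul_pow {M : Type*} [Monoid M] (x : M) {a b : ℤ} {c d : ℕ}
    (h : a * (a + 1) + 2 * c = 2 * d + b * (b + 1)) : x ^ tri a * x ^ c = x ^ d * x ^ tri b := by
  have := two_mul_tri a; have := two_mul_tri b
  rw [← pow_add, ← pow_add, show tri a + c = d + tri b by omega]

theorem neg_one_pow_mul_neg_one_pow_add {M : Type*} [Monoid M] [HasDistribNeg M] (n j : ℕ) :
    (-1 : M) ^ n * (-1) ^ (n + j) = (-1) ^ j := by
  rw [← pow_add, ← add_assoc, ← two_mul, pow_add, pow_mul, neg_one_sq, one_pow, one_mul]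

section jacobiPoly

open Polynomial

variable {R : Type*} [CommRing R]

theorem eval_one_derivative_eq_sum (p : R[X]) {N : ℕ} (h : p.natDegree < N) :
    p.derivative.eval 1 = ∑ i ∈ range N, (i : R) * p.coeff i := by
  rw [derivative_eval, sum_over_range' _ (by simp) N h]
  simp [mul_comm]

theorem eval_one_derivative_one_sub_X_mul (p : R[X]) :
    ((1 - Polynomial.X) * p).derivative.eval 1 = -p.eval 1 := by
  simp

variable (q : R)

noncomputable def jacobiPoly (n : ℕ) : R[X] :=
  ∏ k ∈ range n,
    (Polynomial.C (q ^ k) - Polynomial.X) * (1 - Polynomial.C (q ^ (k + 1)) * Polynomial.X)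

theorem jacobiPoly_succ (n : ℕ) :
    jacobiPoly q (n + 1) = Polynomial.C (q ^ n) * jacobiPoly q n
      - Polynomial.C (1 + q ^ (2 * n + 1)) * (jacobiPoly q n * Polynomial.X)
      + Polynomial.C (q ^ (n + 1)) * (jacobiPoly q n * Polynomial.X ^ 2) := by
  rw [jacobiPoly, prod_range_succ, ← jacobiPoly]
  simp only [map_add, map_one, map_pow]
  ring

theorem jacobiPoly_succ_eq_one_sub_X_mul (n : ℕ) :
    jacobiPoly q (n + 1) = (1 - Polynomial.X) * ((1 - Polynomial.C q * Polynomial.X) *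
      ∏ k ∈ range n, (Polynomial.C (q ^ (k + 1)) - Polynomial.X) *
        (1 - Polynomial.C (q ^ (k + 2)) * Polynomial.X)) := by
  rw [jacobiPoly, prod_range_succ']
  simp only [pow_zero, map_one, zero_add, pow_one]
  ring

theorem eval_one_derivative_jacobiPoly (n : ℕ) :
    (jacobiPoly q (n + 1)).derivative.eval 1 =
      (-1) ^ (n + 1) * qProd q 0 (n + 1) * qProd q 0 n := by
  rw [jacobiPoly_succ_eq_one_sub_X_mul, eval_one_derivative_one_sub_X_mul]
  simp only [eval_mul, eval_prod, eval_sub, eval_one, eval_C, eval_X, mul_one]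
  induction n with
  | zero => simp [qProd_self, qProd_succ]
  | succ n ih =>
    rw [qProd_succ q (Nat.zero_le n)] at ih
    rw [prod_range_succ, qProd_succ q (Nat.zero_le _), qProd_succ q (Nat.zero_le n)]
    linear_combination ((q ^ (n + 1) - 1) * (1 - q ^ (n + 2))) * ih

end jacobiPoly

section Field

variable {K : Type*} [Field K] {q : K}

theorem qProd_ne_zero (hq : ∀ k ≠ 0, 1 - q ^ k ≠ 0) (a b : ℕ) : qProd q a b ≠ 0 :=
  prod_ne_zero_iff.2 fun k hk => hq k (Nat.ne_zero_of_lt (mem_Ioc.1 hk).1)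

variable (q) in
def qBinom (n i : ℕ) : K := if i ≤ n then qProd q (n - i) n / qProd q 0 i else 0

theorem qBinom_of_lt {n i : ℕ} (h : n < i) : qBinom q n i = 0 := if_neg h.not_ge

theorem qBinom_zero (n : ℕ) : qBinom q n 0 = 1 := by simp [qBinom, qProd_self]

theorem qBinom_succ_succ_mul (hq : ∀ k ≠ 0, 1 - q ^ k ≠ 0) (n i : ℕ) :
    qBinom q (n + 1) (i + 1) * (1 - q ^ (i + 1)) = qBinom q n i * (1 - q ^ (n + 1)) := by
  rcases le_or_gt i n with h | h
  · rw [qBinom, qBinom, if_pos (by omega), if_pos h, Nat.add_sub_add_right,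
      qProd_succ q (Nat.sub_le n i), qProd_succ q (Nat.zero_le i)]
    have := qProd_ne_zero hq 0 i
    have := hq (i + 1) (by omega)
    field_simp
  · rw [qBinom_of_lt (by omega), qBinom_of_lt h, zero_mul, zero_mul]

theorem qBinom_succ_mul (hq : ∀ k ≠ 0, 1 - q ^ k ≠ 0) (n i : ℕ) :
    qBinom q n (i + 1) * (1 - q ^ (i + 1)) = qBinom q n i * (1 - q ^ (n - i)) := by
  rcases lt_trichotomy i n with h | rfl | h
  · obtain ⟨a, rfl⟩ : ∃ a, n = a + i + 1 := ⟨n - i - 1, by omega⟩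
    rw [qBinom, qBinom, if_pos (by omega), if_pos (by omega),
      show a + i + 1 - (i + 1) = a by omega, show a + i + 1 - i = a + 1 by omega,
      qProd_succ q (Nat.zero_le i), ← qProd_mul_qProd q (Nat.le_succ a) (by omega),
      qProd_succ q le_rfl, qProd_self]
    have := qProd_ne_zero hq 0 i
    have := hq (i + 1) (by omega)
    field_simp
  · rw [qBinom_of_lt (Nat.lt_succ_self i), Nat.sub_self, pow_zero, sub_self, zero_mul, mul_zero]
  · rw [qBinom_of_lt (by omega), qBinom_of_lt h, zero_mul, zero_mul]

theorem pow_sub_mul_pow_succ_mul_qBinom (n i : ℕ) :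
    q ^ (n - i) * q ^ (i + 1) * qBinom q n i = q ^ (n + 1) * qBinom q n i := by
  rcases le_or_gt i n with h | h
  · rw [← pow_add, show n - i + (i + 1) = n + 1 by omega]
  · rw [qBinom_of_lt h, mul_zero, mul_zero]

theorem qBinom_succ_succ (hq : ∀ k ≠ 0, 1 - q ^ k ≠ 0) (n i : ℕ) :
    qBinom q (n + 1) (i + 1) = qBinom q n (i + 1) + q ^ (n - i) * qBinom q n i := by
  refine mul_right_cancel₀ (hq (i + 1) i.succ_ne_zero) ?_
  rw [qBinom_succ_succ_mul hq, add_mul, qBinom_succ_mul hq]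
  linear_combination pow_sub_mul_pow_succ_mul_qBinom (q := q) n i

theorem qBinom_succ_succ' (hq : ∀ k ≠ 0, 1 - q ^ k ≠ 0) (n i : ℕ) :
    qBinom q (n + 1) (i + 1) = q ^ (i + 1) * qBinom q n (i + 1) + qBinom q n i := by
  refine mul_right_cancel₀ (hq (i + 1) i.succ_ne_zero) ?_
  rw [qBinom_succ_succ_mul hq, add_mul, mul_assoc, qBinom_succ_mul hq]
  linear_combination pow_sub_mul_pow_succ_mul_qBinom (q := q) n i

theorem qProd_mul_qBinom_add (hq : ∀ k ≠ 0, 1 - q ^ k ≠ 0) {N j : ℕ} (hj : j ≤ N) :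
    qProd q 0 N * qBinom q (2 * N) (N + j) = qCentral q N j := by
  rw [qBinom, if_pos (by omega), show 2 * N - (N + j) = N - j by omega, qCentral,
    ← qProd_mul_qProd q (show N - j ≤ N + j by omega) (show N + j ≤ 2 * N by omega),
    ← qProd_mul_qProd q (Nat.sub_le N j) (show N ≤ N + j by omega),
    ← qProd_mul_qProd q (Nat.zero_le N) (show N ≤ N + j by omega)]
  have := qProd_ne_zero hq 0 N
  have := qProd_ne_zero hq N (N + j)
  field_simp

theorem qProd_mul_qBinom_sub (hq : ∀ k ≠ 0, 1 - q ^ k ≠ 0) {N j : ℕ} (hj : j ≤ N) :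
    qProd q 0 N * qBinom q (2 * N) (N - j) = qCentral q N j := by
  rw [qBinom, if_pos (by omega), show 2 * N - (N - j) = N + j by omega, qCentral,
    ← qProd_mul_qProd q (Nat.zero_le (N - j)) (Nat.sub_le N j)]
  have := qProd_ne_zero hq 0 (N - j)
  field_simp

variable (q) in
def jacobiCoeff (n i : ℕ) : K := q ^ tri (i - n) * qBinom q (2 * n) i

theorem jacobiCoeff_of_lt {n i : ℕ} (h : 2 * n < i) : jacobiCoeff q n i = 0 := by
  rw [jacobiCoeff, qBinom_of_lt h, mul_zero]

theorem jacobiCoeff_succ_zero (n : ℕ) :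
    jacobiCoeff q (n + 1) 0 = q ^ n * jacobiCoeff q n 0 := by
  have h := pow_tri_mul_pow q (a := (0 : ℕ) - (n + 1 : ℕ)) (b := (0 : ℕ) - (n : ℕ))
    (c := 0) (d := n) (by push_cast; ring)
  rw [jacobiCoeff, jacobiCoeff, qBinom_zero, qBinom_zero, ← mul_assoc, ← h, pow_zero, mul_one,
    mul_one]

theorem jacobiCoeff_succ_one (hq : ∀ k ≠ 0, 1 - q ^ k ≠ 0) (n : ℕ) :
    jacobiCoeff q (n + 1) 1 =
      q ^ n * jacobiCoeff q n 1 + (1 + q ^ (2 * n + 1)) * jacobiCoeff q n 0 := by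
  have hbinom : qBinom q (2 * (n + 1)) 1 = q * qBinom q (2 * n) 1 + (1 + q ^ (2 * n + 1)) := by
    rw [show 2 * (n + 1) = 2 * n + 1 + 1 by ring, qBinom_succ_succ' hq, qBinom_succ_succ hq,
      qBinom_zero, qBinom_zero, Nat.sub_zero]
    ring
  have h1 := pow_tri_mul_pow q (a := (1 : ℕ) - (n + 1 : ℕ)) (b := (1 : ℕ) - (n : ℕ))
    (c := 1) (d := n) (by push_cast; ring)
  have h0 := pow_tri_mul_pow q (a := (1 : ℕ) - (n + 1 : ℕ)) (b := (0 : ℕ) - (n : ℕ))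
    (c := 0) (d := 0) (by push_cast; ring)
  simp only [pow_zero, one_mul, mul_one] at h0
  rw [jacobiCoeff, jacobiCoeff, jacobiCoeff, hbinom, qBinom_zero, ← h0]
  linear_combination qBinom q (2 * n) 1 * h1

theorem jacobiCoeff_succ_add_two (hq : ∀ k ≠ 0, 1 - q ^ k ≠ 0) (n i : ℕ) :
    jacobiCoeff q (n + 1) (i + 2) = q ^ n * jacobiCoeff q n (i + 2)
      + (1 + q ^ (2 * n + 1)) * jacobiCoeff q n (i + 1) + q ^ (n + 1) * jacobiCoeff q n i := by
  rcases lt_or_ge (2 * n) i with hi | hi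
  · simp only [jacobiCoeff_of_lt hi, jacobiCoeff_of_lt (by omega : 2 * n < i + 1),
      jacobiCoeff_of_lt (by omega : 2 * n < i + 2),
      jacobiCoeff_of_lt (by omega : 2 * (n + 1) < i + 2)]
    ring
  have hbinom : qBinom q (2 * (n + 1)) (i + 2) = q ^ (i + 2) * qBinom q (2 * n) (i + 2)
      + (1 + q ^ (2 * n + 1)) * qBinom q (2 * n) (i + 1)
      + q ^ (2 * n - i) * qBinom q (2 * n) i := by
    rw [show 2 * (n + 1) = 2 * n + 1 + 1 by ring, qBinom_succ_succ' hq, qBinom_succ_succ hq,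
      qBinom_succ_succ hq]
    linear_combination pow_sub_mul_pow_succ_mul_qBinom (q := q) (2 * n) (i + 1)
  have h2 := pow_tri_mul_pow q (a := (i + 2 : ℕ) - (n + 1 : ℕ)) (b := (i + 2 : ℕ) - (n : ℕ))
    (c := i + 2) (d := n) (by push_cast; ring)
  have h1 := pow_tri_mul_pow q (a := (i + 2 : ℕ) - (n + 1 : ℕ)) (b := (i + 1 : ℕ) - (n : ℕ))
    (c := 0) (d := 0) (by push_cast; ring)
  have h0 := pow_tri_mul_pow q (a := (i + 2 : ℕ) - (n + 1 : ℕ)) (b := (i : ℕ) - (n : ℕ))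
    (c := 2 * n - i) (d := n + 1) (by push_cast [Nat.cast_sub hi]; ring)
  simp only [pow_zero, one_mul, mul_one] at h1
  rw [jacobiCoeff, jacobiCoeff, jacobiCoeff, jacobiCoeff, hbinom, ← h1]
  linear_combination qBinom q (2 * n) (i + 2) * h2 + qBinom q (2 * n) i * h0

theorem coeff_jacobiPoly (hq : ∀ k ≠ 0, 1 - q ^ k ≠ 0) (n i : ℕ) :
    (jacobiPoly q n).coeff i = (-1) ^ i * jacobiCoeff q n i := by
  induction n generalizing i with
  | zero =>
    rcases i with _ | i
    · simp [jacobiPoly, jacobiCoeff, qBinom_zero, tri_zero]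
    · simp [jacobiPoly, jacobiCoeff_of_lt, Polynomial.coeff_one]
  | succ n ih =>
    rw [jacobiPoly_succ]
    rcases i with _ | _ | i <;> simp only [Polynomial.coeff_add, Polynomial.coeff_sub,
      Polynomial.coeff_C_mul, Polynomial.coeff_mul_X_zero, Polynomial.coeff_mul_X,
      Polynomial.coeff_mul_X_pow', ih]
    · simp [jacobiCoeff_succ_zero]
    · simp [jacobiCoeff_succ_one hq]
      ring
    · simp [jacobiCoeff_succ_add_two hq, pow_succ]
      ring

theorem natDegree_jacobiPoly_lt (hq : ∀ k ≠ 0, 1 - q ^ k ≠ 0) (n : ℕ) :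
    (jacobiPoly q n).natDegree < 2 * n + 1 :=
  Nat.lt_succ_of_le <| Polynomial.natDegree_le_iff_coeff_eq_zero.2 fun i hi => by
    rw [coeff_jacobiPoly hq, jacobiCoeff_of_lt hi, mul_zero]

theorem sum_mul_neg_one_pow_mul_jacobiCoeff (hq : ∀ k ≠ 0, 1 - q ^ k ≠ 0) (n : ℕ) :
    ∑ i ∈ range (2 * (n + 1) + 1), (i : K) * ((-1) ^ i * jacobiCoeff q (n + 1) i) =
      (-1) ^ (n + 1) * qProd q 0 (n + 1) * qProd q 0 n := by
  rw [← eval_one_derivative_jacobiPoly,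
    eval_one_derivative_eq_sum _ (natDegree_jacobiPoly_lt hq _)]
  simp_rw [coeff_jacobiPoly hq]

theorem qProd_sq_mul_qProd_field (hq : ∀ k ≠ 0, 1 - q ^ k ≠ 0) (n : ℕ) :
    qProd q 0 (n + 1) ^ 2 * qProd q 0 n =
      ∑ j ∈ range (n + 2), (-1) ^ j * ((n : K) + 1 + j) * q ^ tri j * qCentral q (n + 1) j
        - ∑ j ∈ range (n + 1),
            (-1) ^ j * ((n : K) - j) * q ^ tri j * qCentral q (n + 1) (j + 1) := by
  have hW := sum_mul_neg_one_pow_mul_jacobiCoeff hq n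
  rw [show 2 * (n + 1) + 1 = (n + 1) + (n + 2) by ring, sum_range_add, ← sum_range_reflect] at hW
  simp only [Nat.add_sub_cancel] at hW
  have hplus : ∀ j ∈ range (n + 2), (-1) ^ (n + 1) * qProd q 0 (n + 1) *
      (((n + 1 + j : ℕ) : K) * ((-1) ^ (n + 1 + j) * jacobiCoeff q (n + 1) (n + 1 + j))) =
      (-1) ^ j * ((n : K) + 1 + j) * q ^ tri j * qCentral q (n + 1) j := by
    intro j hj
    rw [jacobiCoeff, show ((n + 1 + j : ℕ) : ℤ) - (n + 1 : ℕ) = j by push_cast; ring]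
    push_cast
    linear_combination ((-1) ^ (n + 1) * (-1) ^ (n + 1 + j) * ((n : K) + 1 + j) * q ^ tri j) *
        qProd_mul_qBinom_add hq (Nat.lt_succ_iff.1 (mem_range.1 hj))
      + (((n : K) + 1 + j) * q ^ tri j * qCentral q (n + 1) j) *
        neg_one_pow_mul_neg_one_pow_add (M := K) (n + 1) j
  have hminus : ∀ j ∈ range (n + 1), (-1) ^ (n + 1) * qProd q 0 (n + 1) *
      (((n - j : ℕ) : K) * ((-1) ^ (n - j) * jacobiCoeff q (n + 1) (n - j))) =
      -((-1) ^ j * ((n : K) - j) * q ^ tri j * qCentral q (n + 1) (j + 1)) := by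
    intro j hj
    have hjn : j ≤ n := Nat.lt_succ_iff.1 (mem_range.1 hj)
    have hsign : (-1 : K) ^ (n + 1) * (-1) ^ (n - j) = -(-1) ^ j := by
      rw [show n + 1 = n - j + (j + 1) by omega, mul_comm, neg_one_pow_mul_neg_one_pow_add,
        pow_succ, mul_neg_one]
    have hcentral := qProd_mul_qBinom_sub hq (N := n + 1) (j := j + 1) (by omega)
    rw [Nat.add_sub_add_right] at hcentral
    rw [jacobiCoeff, show ((n - j : ℕ) : ℤ) - (n + 1 : ℕ) = -j - 1 by
      push_cast [Nat.cast_sub hjn]; ring, tri_neg_sub_one]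
    push_cast [Nat.cast_sub hjn]
    linear_combination ((-1) ^ (n + 1) * (-1) ^ (n - j) * ((n : K) - j) * q ^ tri j) * hcentral
      + (((n : K) - j) * q ^ tri j * qCentral q (n + 1) (j + 1)) * hsign
  have hsq : (-1 : K) ^ (n + 1) * (-1) ^ (n + 1) = 1 := by
    simpa using neg_one_pow_mul_neg_one_pow_add (M := K) (n + 1) 0
  calc _ = (-1) ^ (n + 1) * qProd q 0 (n + 1) *
        ((-1) ^ (n + 1) * qProd q 0 (n + 1) * qProd q 0 n) := by
        linear_combination (-(qProd q 0 (n + 1) ^ 2 * qProd q 0 n)) * hsq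
    _ = _ := by
        rw [← hW, mul_add, mul_sum, mul_sum, sum_congr rfl hplus, sum_congr rfl hminus,
          sum_neg_distrib]
        ring

end Field

section CommRing

variable {R : Type*} [CommRing R]

/-- Both sides are polynomials in `q`, so it suffices to treat the variable of `ℤ[X]`, which
lives in a field where every `1 - X ^ k` is invertible. -/
theorem qProd_sq_mul_qProd (q : R) (n : ℕ) :
    qProd q 0 (n + 1) ^ 2 * qProd q 0 n =
      ∑ j ∈ range (n + 2), (-1) ^ j * ((n : R) + 1 + j) * q ^ tri j * qCentral q (n + 1) j
        - ∑ j ∈ range (n + 1),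
            (-1) ^ j * ((n : R) - j) * q ^ tri j * qCentral q (n + 1) (j + 1) := by
  let x := algebraMap (Polynomial ℤ) (FractionRing (Polynomial ℤ)) Polynomial.X
  have hx : ∀ k ≠ 0, 1 - x ^ k ≠ 0 := fun k hk => by
    rw [← map_pow, ← map_one (algebraMap (Polynomial ℤ) _), ← map_sub, Ne,
      IsFractionRing.to_map_eq_zero_iff, sub_eq_zero, eq_comm]
    exact fun h => by simpa [hk] using congrArg Polynomial.natDegree h
  have hX : qProd Polynomial.X 0 (n + 1) ^ 2 * qProd Polynomial.X 0 n =
      ∑ j ∈ range (n + 2), (-1) ^ j * ((n : Polynomial ℤ) + 1 + (j : Polynomial ℤ)) *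
          Polynomial.X ^ tri j * qCentral Polynomial.X (n + 1) j
        - ∑ j ∈ range (n + 1), (-1) ^ j * ((n : Polynomial ℤ) - (j : Polynomial ℤ)) *
          Polynomial.X ^ tri j * qCentral Polynomial.X (n + 1) (j + 1) :=
    IsFractionRing.injective (Polynomial ℤ) (FractionRing (Polynomial ℤ)) <| by
      simpa [qCentral, map_qProd] using qProd_sq_mul_qProd_field hx n
  simpa [qCentral, map_qProd] using congrArg (Polynomial.aeval q) hX

theorem pow_dvd_pow_tri_mul_qCentral_sub_one (q : R) {N i j : ℕ} (hiN : i ≤ N)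
    (hij : i ≤ j + 1) : q ^ N ∣ q ^ tri j * (qCentral q N i - 1) := by
  have := le_tri j
  refine (pow_dvd_pow q (show N ≤ tri j + (N - i + 1) by omega)).trans ?_
  rw [pow_add]
  exact mul_dvd_mul_left _ (pow_succ_dvd_qCentral_sub_one q hiN)

theorem pow_dvd_qProd_pow_three_sub (q : R) (N : ℕ) :
    q ^ N ∣ qProd q 0 N ^ 3 - ∑ j ∈ range N, (-1) ^ j * (2 * (j : R) + 1) * q ^ tri j := by
  rcases N with _ | n
  · simp
  have hcube : qProd q 0 (n + 1) ^ 3 = qProd q 0 (n + 1) ^ 2 * qProd q 0 n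
      - q ^ (n + 1) * (qProd q 0 (n + 1) ^ 2 * qProd q 0 n) := by
    rw [qProd_succ q (Nat.zero_le n)]
    ring
  have hsplit : qProd q 0 (n + 1) ^ 3
        - ∑ j ∈ range (n + 1), (-1) ^ j * (2 * (j : R) + 1) * q ^ tri j =
      ∑ j ∈ range (n + 1), (-1) ^ j *
          (((n : R) + 1 + j) * (q ^ tri j * (qCentral q (n + 1) j - 1))
            - ((n : R) - j) * (q ^ tri j * (qCentral q (n + 1) (j + 1) - 1)))
      + (-1) ^ (n + 1) * ((n : R) + 1 + (n + 1 : ℕ)) * q ^ tri (n + 1 : ℕ) *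
          qCentral q (n + 1) (n + 1)
      - q ^ (n + 1) * (qProd q 0 (n + 1) ^ 2 * qProd q 0 n) := by
    rw [hcube, qProd_sq_mul_qProd, sum_range_succ _ (n + 1)]
    have hterms := sum_congr rfl fun j (_ : j ∈ range (n + 1)) =>
      show (-1) ^ j * (((n : R) + 1 + j) * (q ^ tri j * (qCentral q (n + 1) j - 1))
          - ((n : R) - j) * (q ^ tri j * (qCentral q (n + 1) (j + 1) - 1))) =
        (-1) ^ j * ((n : R) + 1 + j) * q ^ tri j * qCentral q (n + 1) j
          - (-1) ^ j * ((n : R) - j) * q ^ tri j * qCentral q (n + 1) (j + 1)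
          - (-1) ^ j * (2 * (j : R) + 1) * q ^ tri j by ring
    rw [hterms, sum_sub_distrib, sum_sub_distrib]
    ring
  rw [hsplit]
  refine dvd_sub (dvd_add (dvd_sum fun j hj => ?_) ?_) (dvd_mul_right _ _)
  · have hj := mem_range.1 hj
    exact (dvd_sub ((pow_dvd_pow_tri_mul_qCentral_sub_one q (by omega) (by omega)).mul_left _)
      ((pow_dvd_pow_tri_mul_qCentral_sub_one q (by omega) le_rfl).mul_left _)).mul_left _
  · exact ((pow_dvd_pow q (le_tri _)).mul_left _).mul_right _

theorem coeff_qProd_X_pow_pow_three {d n N : ℕ} (h : n < d * N) :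
    coeff n (qProd (X ^ d : R⟦X⟧) 0 N ^ 3) =
      ∑ j ∈ range N, if n = d * tri j then (-1 : R) ^ j * (2 * j + 1) else 0 := by
  have hdvd := pow_dvd_qProd_pow_three_sub (X ^ d : R⟦X⟧) N
  rw [← pow_mul, X_pow_dvd_iff] at hdvd
  have hcoeff := hdvd n h
  rw [map_sub, sub_eq_zero, map_sum] at hcoeff
  rw [hcoeff]
  refine sum_congr rfl fun j _ => ?_
  rw [← pow_mul, show (-1 : R⟦X⟧) ^ j * (2 * j + 1) = C ((-1 : R) ^ j * (2 * j + 1)) by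
      simp only [map_mul, map_pow, map_neg, map_one, map_add, map_natCast, map_ofNat],
    coeff_C_mul_X_pow]

end CommRing

/-- Jacobi's identity rescaled: in `ℤ⟦q⟧`,
`q·∏_{k≥1}(1-q^{9k})^3 = ∑_{j≥0} (-1)^j (2j+1) q^{(9j^2+9j)/2+1}`,
stated coefficientwise; factors with `k > m` do not affect the coefficient of `q^m`. -/
theorem jacobi_rescaled (m : ℕ) :
    PowerSeries.coeff (R := ℤ) m
        (PowerSeries.X * ∏ k ∈ Finset.Icc 1 m, (1 - PowerSeries.X ^ (9 * k)) ^ 3) =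
      ∑ j ∈ Finset.range (m + 1),
        if m = (9 * j ^ 2 + 9 * j) / 2 + 1 then (-1 : ℤ) ^ j * (2 * j + 1) else 0 := by
  rcases m with _ | n
  · simp
  have hprod : ∏ k ∈ Icc 1 (n + 1), (1 - X ^ (9 * k)) ^ 3 =
      qProd (X ^ 9 : ℤ⟦X⟧) 0 (n + 1) ^ 3 := by
    rw [prod_pow, qProd, ← Finset.Icc_add_one_left_eq_Ioc]
    simp_rw [pow_mul, zero_add]
  have htri (j : ℕ) : (9 * j ^ 2 + 9 * j) / 2 = 9 * tri j := by
    have h : 9 * j ^ 2 + 9 * j = 2 * (9 * tri j) := by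
      have := two_mul_tri j
      zify
      linear_combination (-9) * this
    rw [h, Nat.mul_div_cancel_left _ two_pos]
  rw [coeff_succ_X_mul, hprod, coeff_qProd_X_pow_pow_three (by omega), sum_range_succ _ (n + 1),
    if_neg (by have := le_tri (n + 1); rw [htri]; omega), add_zero]
  refine sum_congr rfl fun j _ => ?_
  rw [htri]
  simp
end

section
/- Define cφ3'(n) by ∑_{n≥0} cφ3'(n) q^n = 9 q ∏_{n≥1} (1-q^{9n})^3 / ((1-q^{3n})(1-q^n)^3). Assuming a(15n+6) ≡ 0 (mod 5) and a(15n+12) ≡ 0 (mod 5) for all n ≥ 0 (where ∑ a(n) q^n = ∏_{n≥1}(1-q^{3n})^{-1}(1-q^n)^{-3}), one has cφ3'(45n+37) ≡ 0 (mod 5) for all n ≥ 0. -/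
open PowerSeries Finset

/-- Coefficients of `∏_{k≥1} 1/((1-q^{3k})(1-q^k)^3)` (truncated product suffices). -/
noncomputable def a (n : ℕ) : ℤ :=
  PowerSeries.coeff (R := ℤ) n (PowerSeries.invOfUnit
    (∏ k ∈ Finset.Icc 1 n, ((1 - PowerSeries.X ^ (3 * k)) * (1 - PowerSeries.X ^ k) ^ 3)) 1)

/-- `a` extended to the integers by `0` on negative arguments. -/
noncomputable def aext (j : ℤ) : ℤ := if 0 ≤ j then a j.toNat else 0

/-- Coefficients of `9 q ∏_{k≥1} (1-q^{9k})^3/((1-q^{3k})(1-q^k)^3)`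
(truncated products suffice for the coefficient of `q^n`). -/
noncomputable def cphi3' (n : ℕ) : ℤ :=
  PowerSeries.coeff (R := ℤ) n ((9 : ℤ⟦X⟧) * PowerSeries.X *
    (∏ k ∈ Finset.Icc 1 n, (1 - PowerSeries.X ^ (9 * k)) ^ 3) *
    PowerSeries.invOfUnit
      (∏ k ∈ Finset.Icc 1 n, ((1 - PowerSeries.X ^ (3 * k)) * (1 - PowerSeries.X ^ k) ^ 3)) 1)

/-!
The generating function of `cphi3'` is `9 q (q⁹; q⁹)³_∞ · ∑ a(n) qⁿ`. By Jacobi's identity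
`(q; q)³_∞ = ∑_k (-1)^k (2k + 1) q^(k(k+1)/2)`, a coefficient of `(q⁹; q⁹)³_∞` is divisible by 5
unless its exponent is `9 k(k+1)/2` with `k ≢ 2 (mod 5)`, and then `k(k+1)/2 ≡ 0` or `1 (mod 5)`.
So in `cphi3' (45n + 37) = 9 ∑_{i+j = 45n+36} c(i) a(j)` the surviving terms have
`i ≡ 0, 9 (mod 45)`, i.e. `j = 15m + 6` or `j = 15m + 12`.

Jacobi's identity is proved from its finite form
`∏_{j<n} (Y - x^j)(1 - x^(j+1) Y) = ∑_r (-1)^(r+n) [2n choose r]_x x^(tri (r-n)) Y^r`,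
differentiated at `Y = 1`. Below degree `n` in `x`, each summand of the derivative, multiplied
by `(x; x)_n`, is the single monomial `± r x^(tri (r-n))`, because `(x; x)_n [2n choose r]_x ≡ 1`
modulo a high enough power of `x`.
-/

namespace Cphi3

def tri (k : ℤ) : ℕ := (k * (k + 1) / 2).toNat

lemma two_mul_tri (k : ℤ) : 2 * (tri k : ℤ) = k * (k + 1) := by
  have heven : 2 ∣ k * (k + 1) := (Int.even_mul_succ_self k).two_dvd
  have hnonneg : 0 ≤ k * (k + 1) / 2 := by
    apply Int.ediv_nonneg _ (by norm_num)
    rcases le_or_gt 0 k with h | h <;> nlinarith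
  rw [tri, Int.toNat_of_nonneg hnonneg, Int.mul_ediv_cancel' heven]

lemma tri_neg_sub_one (k : ℤ) : tri (-k - 1) = tri k := by
  have h₁ := two_mul_tri (-k - 1)
  have h₂ := two_mul_tri k
  have : (tri (-k - 1) : ℤ) = tri k := by linarith
  exact_mod_cast this

lemma le_tri (k : ℤ) : k ≤ tri k := by
  nlinarith [two_mul_tri k, sq_nonneg (k - 1)]

lemma neg_sub_one_le_tri (k : ℤ) : -k - 1 ≤ tri k := by
  simpa [tri_neg_sub_one] using le_tri (-k - 1)

lemma tri_mod_five (k : ℕ) (hk : k % 5 ≠ 2) : tri k % 5 = 0 ∨ tri k % 5 = 1 := by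
  obtain ⟨q, r, hr, rfl⟩ : ∃ q r, r < 5 ∧ k = 5 * q + r :=
    ⟨k / 5, k % 5, Nat.mod_lt _ (by norm_num), (Nat.div_add_mod k 5).symm⟩
  have h2 : 2 * (tri (5 * q + r : ℕ) : ℤ) = 5 * (5 * q ^ 2 + 2 * q * r + q) + r * (r + 1) := by
    rw [two_mul_tri]; push_cast; ring
  interval_cases r <;> omega

variable {R : Type*} [CommRing R]

lemma prod_Icc_one_eq_prod_range {M : Type*} [CommMonoid M] (f : ℕ → M) (n : ℕ) :
    ∏ k ∈ Icc 1 n, f k = ∏ k ∈ range n, f (k + 1) := by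
  rw [range_eq_Ico, prod_Ico_add', zero_add, Ico_add_one_right_eq_Icc]

/-- The `q`-Pochhammer symbol `(x; x)_n`. -/
def qPoch (x : R) (n : ℕ) : R := ∏ k ∈ range n, (1 - x ^ (k + 1))

lemma qPoch_succ (x : R) (n : ℕ) : qPoch x (n + 1) = qPoch x n * (1 - x ^ (n + 1)) :=
  prod_range_succ _ _

lemma qPoch_mul_prod_Ico (x : R) {r M : ℕ} (h : r ≤ M) :
    qPoch x r * ∏ k ∈ Ico r M, (1 - x ^ (k + 1)) = qPoch x M :=
  prod_range_mul_prod_Ico _ h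

def gaussBinom (x : R) : ℕ → ℕ → R
  | _, 0 => 1
  | 0, _ + 1 => 0
  | m + 1, r + 1 => gaussBinom x m r + x ^ (r + 1) * gaussBinom x m (r + 1)

@[simp] lemma gaussBinom_zero_right (x : R) (m : ℕ) : gaussBinom x m 0 = 1 := by
  cases m <;> rfl

@[simp] lemma gaussBinom_zero_succ (x : R) (r : ℕ) : gaussBinom x 0 (r + 1) = 0 := rfl

lemma gaussBinom_succ_succ (x : R) (m r : ℕ) :
    gaussBinom x (m + 1) (r + 1) = gaussBinom x m r + x ^ (r + 1) * gaussBinom x m (r + 1) := rfl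

lemma gaussBinom_eq_zero_of_lt (x : R) {m r : ℕ} (h : m < r) : gaussBinom x m r = 0 := by
  induction m generalizing r with
  | zero => obtain ⟨r, rfl⟩ := Nat.exists_eq_succ_of_ne_zero h.ne'; rfl
  | succ m ih =>
    obtain ⟨r, rfl⟩ := Nat.exists_eq_succ_of_ne_zero (by omega : r ≠ 0)
    rw [gaussBinom_succ_succ, ih (by omega), ih (by omega), mul_zero, add_zero]

lemma gaussBinom_succ_succ' (x : R) (m r : ℕ) :
    gaussBinom x (m + 1) (r + 1) = x ^ (m - r) * gaussBinom x m r + gaussBinom x m (r + 1) := by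
  induction m generalizing r with
  | zero => cases r <;> simp [gaussBinom_succ_succ]
  | succ m ih =>
    cases r with
    | zero =>
      have h := ih 0
      simp only [gaussBinom_succ_succ, gaussBinom_zero_right, Nat.sub_zero] at h ⊢
      linear_combination x * h
    | succ s =>
      rw [gaussBinom_succ_succ (m := m + 1), Nat.add_sub_add_right]
      have i₁ := ih s
      have i₂ := ih (s + 1)
      have p₁ := gaussBinom_succ_succ x m s
      have p₂ := gaussBinom_succ_succ x m (s + 1)
      rcases lt_or_ge s m with hs | hs
      · have hpow : x ^ (s + 1 + 1) * x ^ (m - (s + 1)) = x ^ (m - s) * x ^ (s + 1) := by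
          rw [← pow_add, ← pow_add]; congr 1; omega
        linear_combination i₁ + x ^ (s + 1 + 1) * i₂ - x ^ (m - s) * p₁ - p₂
          + gaussBinom x m (s + 1) * hpow
      · rw [gaussBinom_eq_zero_of_lt x (by omega : m < s + 1)] at i₁ i₂ p₁ p₂
        rw [gaussBinom_eq_zero_of_lt x (by omega : m < s + 1 + 1)] at i₂ p₂
        linear_combination i₁ + x ^ (s + 1 + 1) * i₂ - x ^ (m - s) * p₁ - p₂

/-- For `r > m` both sides vanish, the right one through its factor `1 - x ^ 0`. -/
lemma gaussBinom_mul_qPoch (x : R) (m r : ℕ) :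
    gaussBinom x m r * qPoch x r = ∏ i ∈ range r, (1 - x ^ (m - i)) := by
  induction m generalizing r with
  | zero => cases r <;> simp [qPoch, prod_range_succ']
  | succ m ih =>
    cases r with
    | zero => simp [qPoch]
    | succ r =>
      rw [gaussBinom_succ_succ, qPoch_succ, prod_range_succ', Nat.sub_zero]
      have h₁ := ih r
      have h₂ : gaussBinom x m (r + 1) * (qPoch x r * (1 - x ^ (r + 1)))
          = (∏ i ∈ range r, (1 - x ^ (m - i))) * (1 - x ^ (m - r)) := by
        rw [← qPoch_succ, ih, prod_range_succ]
      have h₃ : ∏ i ∈ range r, (1 - x ^ (m + 1 - (i + 1))) = ∏ i ∈ range r, (1 - x ^ (m - i)) := by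
        simp only [Nat.add_sub_add_right]
      rw [h₃]
      rcases le_or_gt r m with hr | hr
      · have hpow : x ^ (r + 1) * x ^ (m - r) = x ^ (m + 1) := by
          rw [← pow_add]; congr 1; omega
        linear_combination (1 - x ^ (r + 1)) * h₁ + x ^ (r + 1) * h₂
          - (∏ i ∈ range r, (1 - x ^ (m - i))) * hpow
      · have hzero : ∏ i ∈ range r, (1 - x ^ (m - i)) = 0 :=
          prod_eq_zero (mem_range.2 hr) (by simp)
        rw [hzero] at h₁ h₂ ⊢
        linear_combination (1 - x ^ (r + 1)) * h₁ + x ^ (r + 1) * h₂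

lemma pow_mul_pow_tri (x : R) (a b : ℕ) (k l : ℤ)
    (h : 2 * ((a : ℤ) - b) = l * (l + 1) - k * (k + 1)) :
    x ^ a * x ^ tri k = x ^ b * x ^ tri l := by
  rw [← pow_add, ← pow_add]
  have := two_mul_tri k
  have := two_mul_tri l
  congr 1
  omega

lemma gaussBinom_add_two_add_two (x : R) (m s : ℕ) :
    gaussBinom x (m + 2) (s + 2) = x ^ (m - s) * gaussBinom x m s
      + (1 + x ^ (m + 1)) * gaussBinom x m (s + 1) + x ^ (s + 2) * gaussBinom x m (s + 2) := by
  rw [gaussBinom_succ_succ, gaussBinom_succ_succ', gaussBinom_succ_succ']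
  rcases lt_or_ge s m with hs | hs
  · have hpow : x ^ (s + 1 + 1) * x ^ (m - (s + 1)) = x ^ (m + 1) := by
      rw [← pow_add]; congr 1; omega
    linear_combination gaussBinom x m (s + 1) * hpow
  · rw [gaussBinom_eq_zero_of_lt x (by omega : m < s + 1),
      gaussBinom_eq_zero_of_lt x (by omega : m < s + 2)]
    ring

def jacobiCoeff (x : R) (n r : ℕ) : R :=
  (-1) ^ (r + n) * gaussBinom x (2 * n) r * x ^ tri (r - n)

lemma jacobiCoeff_succ (x : R) (n r : ℕ) :
    jacobiCoeff x (n + 1) r = -x ^ n * jacobiCoeff x n r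
      + (1 + x ^ (2 * n + 1)) * (if 1 ≤ r then jacobiCoeff x n (r - 1) else 0)
      - x ^ (n + 1) * (if 2 ≤ r then jacobiCoeff x n (r - 2) else 0) := by
  simp only [jacobiCoeff, show 2 * (n + 1) = 2 * n + 2 by ring]
  rcases r with _ | _ | s
  · have hexp := pow_mul_pow_tri x 0 n ((0 : ℕ) - (n + 1 : ℕ)) ((0 : ℕ) - n) (by push_cast; ring)
    rw [if_neg (by omega), if_neg (by omega), gaussBinom_zero_right, gaussBinom_zero_right]
    linear_combination (-1) ^ (n + 1) * hexp
  · have hB : gaussBinom x (2 * n + 2) 1 = 1 + x ^ (2 * n + 1) + x * gaussBinom x (2 * n) 1 := by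
      rw [gaussBinom_succ_succ, gaussBinom_succ_succ']
      simp only [gaussBinom_zero_right, Nat.sub_zero]
      ring
    have hexp := pow_mul_pow_tri x 1 n ((0 + 1 : ℕ) - (n + 1 : ℕ)) ((0 + 1 : ℕ) - n)
      (by push_cast; ring)
    have harg : tri ((0 + 1 : ℕ) - (n + 1 : ℕ)) = tri ((0 + 1 - 1 : ℕ) - n) := by
      congr 1; push_cast; ring
    rw [if_pos (by omega), if_neg (by omega), hB, harg, Nat.add_sub_cancel, gaussBinom_zero_right]
    rw [harg] at hexp
    linear_combination (-1) ^ n * gaussBinom x (2 * n) 1 * hexp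
  · have harg : tri ((s + 1 + 1 : ℕ) - (n + 1 : ℕ)) = tri ((s + 1 : ℕ) - n) := by
      congr 1; push_cast; ring
    have hc := pow_mul_pow_tri x (s + 2) n ((s + 1 + 1 : ℕ) - (n + 1 : ℕ)) ((s + 1 + 1 : ℕ) - n)
      (by push_cast; ring)
    rw [if_pos (by omega), if_pos (by omega), Nat.add_sub_cancel, (by omega : s + 1 + 1 - 2 = s),
      gaussBinom_add_two_add_two]
    rcases le_or_gt s (2 * n) with hs | hs
    · have ha := pow_mul_pow_tri x (2 * n - s) (n + 1) ((s + 1 + 1 : ℕ) - (n + 1 : ℕ)) (s - n)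
        (by push_cast [hs]; ring)
      rw [harg] at ha hc ⊢
      linear_combination (-(-1) ^ (s + n) * gaussBinom x (2 * n) s) * ha
        - (-1) ^ (s + n) * gaussBinom x (2 * n) (s + 2) * hc
    · rw [gaussBinom_eq_zero_of_lt x hs]
      rw [harg] at hc ⊢
      linear_combination (-(-1) ^ (s + n) * gaussBinom x (2 * n) (s + 2)) * hc

/-- A finite form of the Jacobi triple product. -/
noncomputable def jacobiPoly (x : R) (n : ℕ) : Polynomial R :=
  ∏ j ∈ range n,
    (Polynomial.X - Polynomial.C (x ^ j)) * (1 - Polynomial.C (x ^ (j + 1)) * Polynomial.X)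

lemma coeff_jacobiPoly (x : R) (n r : ℕ) : (jacobiPoly x n).coeff r = jacobiCoeff x n r := by
  induction n generalizing r with
  | zero => cases r <;> simp [jacobiPoly, jacobiCoeff, Polynomial.coeff_one, tri]
  | succ n ih =>
    have hfactor : (Polynomial.X - Polynomial.C (x ^ n))
          * (1 - Polynomial.C (x ^ (n + 1)) * Polynomial.X)
        = -Polynomial.C (x ^ n) + Polynomial.C (1 + x ^ (2 * n + 1)) * Polynomial.X ^ 1
          - Polynomial.C (x ^ (n + 1)) * Polynomial.X ^ 2 := by
      simp only [map_add, map_one, map_pow]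
      ring
    rw [jacobiPoly, prod_range_succ, ← jacobiPoly, hfactor, jacobiCoeff_succ]
    simp only [mul_sub, mul_add, mul_neg, Polynomial.coeff_sub, Polynomial.coeff_add,
      Polynomial.coeff_neg, mul_comm _ (Polynomial.C _), ← mul_assoc, Polynomial.coeff_C_mul,
      Polynomial.coeff_mul_X_pow', ih]
    split_ifs <;> ring

lemma jacobiCoeff_eq_zero_of_lt (x : R) {n r : ℕ} (h : 2 * n < r) : jacobiCoeff x n r = 0 := by
  rw [jacobiCoeff, gaussBinom_eq_zero_of_lt x h, mul_zero, zero_mul]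

/-- Differentiating the product at `Y = 1`, where its factor `Y - 1` vanishes. -/
lemma sum_mul_jacobiCoeff (x : R) (n : ℕ) :
    ∑ r ∈ range (2 * n + 3), (r : R) * jacobiCoeff x (n + 1) r = qPoch x (n + 1) * qPoch x n := by
  set G : Polynomial R := (1 - Polynomial.C x * Polynomial.X) * ∏ j ∈ range n,
    (Polynomial.X - Polynomial.C (x ^ (j + 1))) * (1 - Polynomial.C (x ^ (j + 2)) * Polynomial.X)
  have hsplit : jacobiPoly x (n + 1) = (Polynomial.X - 1) * G := by
    simp only [jacobiPoly, G, prod_range_succ' _ n, pow_zero, zero_add, pow_one, map_one,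
      add_assoc, Nat.reduceAdd]
    ring
  have hG : G.eval 1 = qPoch x (n + 1) * qPoch x n := by
    simp only [G, qPoch, Polynomial.eval_mul, Polynomial.eval_sub, Polynomial.eval_one,
      Polynomial.eval_C, Polynomial.eval_X, Polynomial.eval_prod, prod_range_succ' _ n,
      add_assoc, Nat.reduceAdd, prod_mul_distrib, mul_one]
    ring
  have hderiv : (Polynomial.derivative (jacobiPoly x (n + 1))).eval 1 = G.eval 1 := by
    simp [hsplit, Polynomial.derivative_mul]
  have hsupp : (jacobiPoly x (n + 1)).support ⊆ range (2 * n + 3) := fun r hr => by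
    rw [mem_range]
    by_contra! hr'
    exact (Polynomial.mem_support_iff.1 hr) (by rw [coeff_jacobiPoly,
      jacobiCoeff_eq_zero_of_lt x (by omega)])
  rw [← hG, ← hderiv, Polynomial.derivative_eval, Polynomial.sum_def,
    sum_subset hsupp fun r _ hr => by rw [Polynomial.notMem_support_iff.1 hr, zero_mul, zero_mul]]
  exact sum_congr rfl fun r _ => by rw [coeff_jacobiPoly, one_pow, mul_one, mul_comm]

lemma qPoch_cube (x : R) (n : ℕ) : qPoch x (n + 1) ^ 3 = ∑ r ∈ range (2 * n + 3),
    (r : R) * ((1 - x ^ (n + 1)) * qPoch x (n + 1) * jacobiCoeff x (n + 1) r) := by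
  calc qPoch x (n + 1) ^ 3 = (1 - x ^ (n + 1)) * qPoch x (n + 1)
        * ∑ r ∈ range (2 * n + 3), (r : R) * jacobiCoeff x (n + 1) r := by
        rw [sum_mul_jacobiCoeff, qPoch_succ x n]; ring
    _ = _ := by rw [mul_sum]; exact sum_congr rfl fun r _ => by ring

lemma one_sub_pow_smodEq_one (x : R) {d k : ℕ} (h : d ≤ k) :
    1 - x ^ k ≡ 1 [SMOD Ideal.span {x ^ d}] := by
  rw [SModEq.sub_mem, sub_sub_cancel_left, neg_mem_iff, Ideal.mem_span_singleton]
  exact pow_dvd_pow x h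

lemma smodEq_mono (x : R) {d e : ℕ} (h : d ≤ e) {a b : R}
    (hab : a ≡ b [SMOD Ideal.span {x ^ e}]) : a ≡ b [SMOD Ideal.span {x ^ d}] :=
  hab.mono (Ideal.span_singleton_le_span_singleton.2 (pow_dvd_pow x h))

lemma prod_Ico_one_sub_pow_smodEq_one (x : R) (r M : ℕ) :
    ∏ k ∈ Ico r M, (1 - x ^ (k + 1)) ≡ 1 [SMOD Ideal.span {x ^ (r + 1)}] := by
  simpa using SModEq.prod (y := fun _ => 1) fun k hk =>
    one_sub_pow_smodEq_one x (by rw [mem_Ico] at hk; omega)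

lemma gaussBinom_mul_qPoch_smodEq_one (x : R) {m r : ℕ} (h : r ≤ m) :
    gaussBinom x m r * qPoch x r ≡ 1 [SMOD Ideal.span {x ^ (m - r + 1)}] := by
  rw [gaussBinom_mul_qPoch]
  simpa using SModEq.prod (y := fun _ => 1) fun i hi =>
    one_sub_pow_smodEq_one x (by rw [mem_range] at hi; omega)

lemma qPoch_mul_gaussBinom_smodEq_one (x : R) {M r d : ℕ} (hr : r ≤ 2 * M)
    (hd₁ : d ≤ r + 1) (hd₂ : d ≤ 2 * M - r + 1) :
    qPoch x M * gaussBinom x (2 * M) r ≡ 1 [SMOD Ideal.span {x ^ d}] := by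
  have hB := smodEq_mono x hd₂ (gaussBinom_mul_qPoch_smodEq_one x hr)
  rcases le_total r M with h | h
  · have hT := smodEq_mono x hd₁ (prod_Ico_one_sub_pow_smodEq_one x r M)
    rw [← qPoch_mul_prod_Ico x h]
    convert hB.mul hT using 1 <;> ring
  · have hT : ∏ k ∈ Ico M r, (1 - x ^ (k + 1)) ≡ 1 [SMOD Ideal.span {x ^ d}] :=
      smodEq_mono x (by omega) (prod_Ico_one_sub_pow_smodEq_one x M r)
    rw [← qPoch_mul_prod_Ico x h] at hB
    calc qPoch x M * gaussBinom x (2 * M) r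
        = qPoch x M * gaussBinom x (2 * M) r * 1 := (mul_one _).symm
      _ ≡ qPoch x M * gaussBinom x (2 * M) r * ∏ k ∈ Ico M r, (1 - x ^ (k + 1))
          [SMOD Ideal.span {x ^ d}] := (SModEq.refl _).mul hT.symm
      _ ≡ 1 [SMOD Ideal.span {x ^ d}] := by convert hB using 1; ring

lemma coeff_eq_of_smodEq {f g : R⟦X⟧} {d j : ℕ} (h : f ≡ g [SMOD Ideal.span {X ^ d}])
    (hj : j < d) : coeff j f = coeff j g := by
  rw [SModEq.sub_mem, Ideal.mem_span_singleton, X_pow_dvd_iff] at h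
  simpa [sub_eq_zero] using h j hj

lemma coeff_qPoch_cube_summand (m M r i : ℕ) (hr : r ≤ 2 * M) (hi : i < m * M) :
    coeff i ((1 - ((X : R⟦X⟧) ^ m) ^ M) * qPoch (X ^ m) M * jacobiCoeff (X ^ m) M r)
      = if i = m * tri (r - M) then (-1) ^ (r + M) else 0 := by
  set t := tri (r - M)
  set d := M - t
  have ht₁ := le_tri (r - M)
  have ht₂ := neg_sub_one_le_tri (r - M)
  have hu : (1 - ((X : R⟦X⟧) ^ m) ^ M) * (qPoch (X ^ m) M * gaussBinom (X ^ m) (2 * M) r)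
      ≡ 1 * 1 [SMOD Ideal.span {((X : R⟦X⟧) ^ m) ^ d}] :=
    (one_sub_pow_smodEq_one _ (by omega)).mul
      (qPoch_mul_gaussBinom_smodEq_one _ hr (by omega) (by omega))
  rw [mul_one, ← pow_mul] at hu
  have hsplit : (1 - ((X : R⟦X⟧) ^ m) ^ M) * qPoch (X ^ m) M * jacobiCoeff (X ^ m) M r
      = X ^ (m * t) * (C ((-1) ^ (r + M)) * ((1 - ((X : R⟦X⟧) ^ m) ^ M)
        * (qPoch (X ^ m) M * gaussBinom (X ^ m) (2 * M) r))) := by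
    simp only [jacobiCoeff, map_pow, map_neg, map_one, pow_mul]
    ring
  rw [hsplit, coeff_X_pow_mul']
  split_ifs with hle heq heq
  · rw [coeff_C_mul, coeff_eq_of_smodEq hu (by rw [Nat.mul_sub]; omega), coeff_one,
      if_pos (by omega), mul_one]
  · rw [coeff_C_mul, coeff_eq_of_smodEq hu (by rw [Nat.mul_sub]; omega), coeff_one,
      if_neg (by omega), mul_zero]
  · omega
  · rfl

/-- Jacobi's identity `∏ (1 - q^j)^3 = ∑_k (-1)^k (2k+1) q^(k(k+1)/2)`, read off at `q = X^m`
below the degree where the truncation of the product matters. -/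
theorem coeff_qPoch_X_pow_cube (m n i : ℕ) (hi : i < m * (n + 1)) :
    coeff i (qPoch ((X : R⟦X⟧) ^ m) (n + 1) ^ 3)
      = ∑ k ∈ range (n + 1), if i = m * tri k then (-1) ^ k * (2 * k + 1 : R) else 0 := by
  set f : ℕ → R := fun r => r * if i = m * tri (r - (n + 1 : ℕ)) then (-1) ^ (r + (n + 1)) else 0
  have hcoeff : coeff i (qPoch ((X : R⟦X⟧) ^ m) (n + 1) ^ 3) = ∑ r ∈ range (2 * n + 3), f r := by
    rw [qPoch_cube, map_sum]
    refine sum_congr rfl fun r hr => ?_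
    rw [← map_natCast (C (R := R)), coeff_C_mul,
      coeff_qPoch_cube_summand m (n + 1) r i (by rw [mem_range] at hr; omega) hi]
  have hlast : f (n + 1 + (n + 1)) = 0 := by
    have harg : ((n + 1 + (n + 1) : ℕ) : ℤ) - (n + 1 : ℕ) = (n + 1 : ℕ) := by push_cast; ring
    have htri : n + 1 ≤ tri (n + 1 : ℕ) := by exact_mod_cast le_tri (n + 1 : ℕ)
    simp only [f, harg]
    rw [if_neg fun h => by nlinarith, mul_zero]
  have hpair : ∀ k ∈ range (n + 1), f (n + 1 - 1 - k) + f (n + 1 + k)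
      = if i = m * tri k then (-1) ^ k * (2 * k + 1 : R) else 0 := by
    intro k hk
    obtain ⟨j, rfl⟩ : ∃ j, n = k + j := ⟨n - k, by rw [mem_range] at hk; omega⟩
    have harg₁ : ((k + j + 1 - 1 - k : ℕ) : ℤ) - (k + j + 1 : ℕ) = -k - 1 := by
      rw [show k + j + 1 - 1 - k = j by omega]; push_cast; ring
    have harg₂ : ((k + j + 1 + k : ℕ) : ℤ) - (k + j + 1 : ℕ) = k := by push_cast; ring
    have hsign₁ : (-1 : R) ^ (k + j + 1 - 1 - k + (k + j + 1)) = -(-1) ^ k := by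
      rw [show k + j + 1 - 1 - k + (k + j + 1) = 2 * j + k + 1 by omega, pow_succ, pow_add,
        pow_mul, neg_one_sq, one_pow, one_mul, mul_neg_one]
    have hsign₂ : (-1 : R) ^ (k + j + 1 + k + (k + j + 1)) = (-1) ^ k := by
      rw [show k + j + 1 + k + (k + j + 1) = 2 * (k + j + 1) + k by ring, pow_add, pow_mul,
        neg_one_sq, one_pow, one_mul]
    simp only [f, harg₁, tri_neg_sub_one, harg₂, hsign₁, hsign₂]
    split_ifs
    · rw [show k + j + 1 - 1 - k = j by omega]
      push_cast
      ring
    · simp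
  rw [hcoeff, show 2 * n + 3 = (n + 1) + (n + 2) by ring, sum_range_add, sum_range_succ _ (n + 1),
    hlast, add_zero, ← sum_range_reflect, ← sum_add_distrib]
  exact sum_congr rfl hpair

lemma five_dvd_coeff_or (m n i : ℕ) (hi : i < m * (n + 1)) :
    (5 : ℤ) ∣ coeff i (qPoch ((X : ℤ⟦X⟧) ^ m) (n + 1) ^ 3)
      ∨ ∃ t, i = m * t ∧ (t % 5 = 0 ∨ t % 5 = 1) := by
  by_cases h : ∃ k : ℕ, i = m * tri k ∧ k % 5 ≠ 2
  · obtain ⟨k, hik, hk⟩ := h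
    exact Or.inr ⟨tri k, hik, tri_mod_five k hk⟩
  · push Not at h
    refine Or.inl ?_
    rw [coeff_qPoch_X_pow_cube m n i hi]
    refine dvd_sum fun k _ => ?_
    split_ifs with hik
    · apply Dvd.dvd.mul_left
      have := h k hik
      exact ⟨2 * (k / 5 : ℕ) + 1, by push_cast; omega⟩
    · exact dvd_zero 5

lemma invOfUnit_smodEq {I : Ideal R⟦X⟧} {φ ψ : R⟦X⟧} (hφ : constantCoeff φ = 1)
    (hψ : constantCoeff ψ = 1) (h : φ ≡ ψ [SMOD I]) :
    invOfUnit φ 1 ≡ invOfUnit ψ 1 [SMOD I] := by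
  have hφ' : φ * invOfUnit φ 1 = 1 := mul_invOfUnit φ 1 (by simp [hφ])
  have hψ' : ψ * invOfUnit ψ 1 = 1 := mul_invOfUnit ψ 1 (by simp [hψ])
  calc invOfUnit φ 1 = invOfUnit φ 1 * (ψ * invOfUnit ψ 1) := by rw [hψ', mul_one]
    _ ≡ invOfUnit φ 1 * (φ * invOfUnit ψ 1) [SMOD I] :=
        (SModEq.refl _).mul (h.symm.mul (SModEq.refl _))
    _ = invOfUnit ψ 1 := by rw [← mul_assoc, mul_comm _ φ, hφ', one_mul]

lemma prod_Icc_smodEq_prod_Icc (f : ℕ → R⟦X⟧)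
    (hf : ∀ k, f (k + 1) ≡ 1 [SMOD Ideal.span {X ^ (k + 1)}]) {j N : ℕ} (hjN : j ≤ N) :
    ∏ k ∈ Icc 1 N, f k ≡ ∏ k ∈ Icc 1 j, f k [SMOD Ideal.span {X ^ (j + 1)}] := by
  rw [prod_Icc_one_eq_prod_range, prod_Icc_one_eq_prod_range, ← prod_range_mul_prod_Ico _ hjN]
  have htail : ∏ k ∈ Ico j N, f (k + 1) ≡ 1 [SMOD Ideal.span {X ^ (j + 1)}] := by
    simpa using SModEq.prod (y := fun _ => 1) fun k hk =>
      smodEq_mono X (by rw [mem_Ico] at hk; omega) (hf k)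
  simpa using (SModEq.refl (∏ k ∈ range j, f (k + 1))).mul htail

lemma coeff_invOfUnit_prod_Icc (f : ℕ → R⟦X⟧)
    (hf : ∀ k, f (k + 1) ≡ 1 [SMOD Ideal.span {X ^ (k + 1)}]) {j N : ℕ} (hjN : j ≤ N) :
    coeff j (invOfUnit (∏ k ∈ Icc 1 N, f k) 1) = coeff j (invOfUnit (∏ k ∈ Icc 1 j, f k) 1) := by
  have hconst : ∀ n, constantCoeff (∏ k ∈ Icc 1 n, f k) = 1 := fun n => by
    rw [map_prod]
    refine prod_eq_one fun k hk => ?_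
    obtain ⟨k, rfl⟩ : ∃ k', k = k' + 1 := ⟨k - 1, by rw [mem_Icc] at hk; omega⟩
    simpa using coeff_eq_of_smodEq (hf k) (j := 0) (by omega)
  exact coeff_eq_of_smodEq (invOfUnit_smodEq (hconst N) (hconst j)
    (prod_Icc_smodEq_prod_Icc f hf hjN)) (Nat.lt_succ_self j)

lemma one_sub_X_pow_mul_smodEq_one (k : ℕ) :
    (1 - (X : ℤ⟦X⟧) ^ (3 * k)) * (1 - X ^ k) ^ 3 ≡ 1 [SMOD Ideal.span {X ^ k}] := by
  simpa using (one_sub_pow_smodEq_one X (by omega : k ≤ 3 * k)).mul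
    ((one_sub_pow_smodEq_one X le_rfl).pow 3)

lemma coeff_invOfUnit_eq_a {j N : ℕ} (h : j ≤ N) :
    coeff j (invOfUnit (∏ k ∈ Icc 1 N, ((1 - (X : ℤ⟦X⟧) ^ (3 * k)) * (1 - X ^ k) ^ 3)) 1) = a j :=
  coeff_invOfUnit_prod_Icc _ (fun k => one_sub_X_pow_mul_smodEq_one (k + 1)) h

lemma cphi3'_succ_eq_sum (N : ℕ) : cphi3' (N + 1)
    = 9 * ∑ p ∈ antidiagonal N, coeff p.1 (qPoch ((X : ℤ⟦X⟧) ^ 9) (N + 1) ^ 3) * a p.2 := by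
  have hG : ∏ k ∈ Icc 1 (N + 1), (1 - (X : ℤ⟦X⟧) ^ (9 * k)) ^ 3 = qPoch (X ^ 9) (N + 1) ^ 3 := by
    simp only [prod_Icc_one_eq_prod_range, qPoch, prod_pow, pow_mul]
  rw [cphi3', hG, show (9 : ℤ⟦X⟧) = C 9 from (map_ofNat C 9).symm, mul_comm (C 9) X, mul_assoc,
    mul_assoc, coeff_succ_X_mul, coeff_C_mul, coeff_mul]
  exact congrArg _ (sum_congr rfl fun p hp => by
    rw [coeff_invOfUnit_eq_a (by rw [HasAntidiagonal.mem_antidiagonal] at hp; omega)])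

end Cphi3

open Cphi3 in
theorem cphi3'_cong_37
    (ha6 : ∀ n : ℕ, a (15 * n + 6) ≡ 0 [ZMOD 5])
    (ha12 : ∀ n : ℕ, a (15 * n + 12) ≡ 0 [ZMOD 5]) :
    ∀ n : ℕ, cphi3' (45 * n + 37) ≡ 0 [ZMOD 5] := by
  intro n
  rw [Int.modEq_zero_iff_dvd, show 45 * n + 37 = 45 * n + 36 + 1 from rfl, cphi3'_succ_eq_sum]
  refine Dvd.dvd.mul_left (dvd_sum fun p hp => ?_) _
  rw [HasAntidiagonal.mem_antidiagonal] at hp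
  rcases five_dvd_coeff_or 9 (45 * n + 36) p.1 (by omega) with h | ⟨t, ht, ht5 | ht5⟩
  · exact h.mul_right _
  · have hp2 : p.2 = 15 * (3 * (n - t / 5) + 2) + 6 := by omega
    exact (hp2 ▸ Int.modEq_zero_iff_dvd.1 (ha6 _)).mul_left _
  · have hp2 : p.2 = 15 * (3 * (n - t / 5) + 1) + 12 := by omega
    exact (hp2 ▸ Int.modEq_zero_iff_dvd.1 (ha12 _)).mul_left _
end

section
/- For every nonnegative integer n and every integer k ≥ 0, if 45n+7 - 1 - (9k^2+9k)/2 ≥ 0 and 2k+1 ≢ 0 (mod 5), then 45n+7 - 1 - (9k^2+9k)/2 is congruent to 6 or 12 modulo 15. -/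
/-!
Writing `T = k(k+1)/2`, the subtracted quantity is `9T`, and `2T = k(k+1)` shows that `T mod 5`
depends only on `k mod 5`: it is `0, 1, 3, 1, 0` for `k ≡ 0, …, 4`. The residue `3` occurs exactly
when `k ≡ 2 (mod 5)`, i.e. when `5 ∣ 2k + 1`; otherwise `9T ≡ 0` or `9 (mod 15)`, and
`45n + 6 - 9T ≡ 6` or `12 (mod 15)`.
-/

lemma triangle_mod_five_of_not_dvd {k : ℕ} (hk : ¬ 5 ∣ 2 * k + 1) :
    k * (k + 1) / 2 % 5 = 0 ∨ k * (k + 1) / 2 % 5 = 1 := by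
  have htwice : 2 * (k * (k + 1) / 2) = k * (k + 1) :=
    Nat.mul_div_cancel' (Nat.even_mul_succ_self k).two_dvd
  have hmod : k * (k + 1) ≡ k % 5 * (k % 5 + 1) [MOD 5] :=
    ((Nat.mod_modEq k 5).mul ((Nat.mod_modEq k 5).add_right 1)).symm
  rw [← htwice] at hmod
  unfold Nat.ModEq at hmod
  have hr : k % 5 < 5 := Nat.mod_lt k (by norm_num)
  generalize hr' : k % 5 = r at hmod hr
  interval_cases r <;> omega

lemma nine_mul_sq_add_div_two (k : ℕ) : (9 * k ^ 2 + 9 * k) / 2 = 9 * (k * (k + 1) / 2) := by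
  rw [show 9 * k ^ 2 + 9 * k = 9 * (k * (k + 1)) by ring,
    Nat.mul_div_assoc _ (Nat.even_mul_succ_self k).two_dvd]

theorem index_mod_fifteen_seven (n k : ℕ)
    (hnonneg : 1 + (9 * k ^ 2 + 9 * k) / 2 ≤ 45 * n + 7)
    (hk : ¬ (5 ∣ 2 * k + 1)) :
    (45 * n + 7 - 1 - (9 * k ^ 2 + 9 * k) / 2) % 15 = 6 ∨
      (45 * n + 7 - 1 - (9 * k ^ 2 + 9 * k) / 2) % 15 = 12 := by
  rw [nine_mul_sq_add_div_two] at hnonneg ⊢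
  have := triangle_mod_five_of_not_dvd hk
  omega
end
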